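/- arXiv:2408.02453 — 12 statements merged into one kernel-verified Lean document; each statement's English description precedes it below -/
import Mathlib

section
/- Let 1 < p ≤ 2 and s ≥ 2. Define G(t) = (1 + t^s)² / (1 + t² − 2t·cos(π/p))^s for t ∈ [0,1]. Then G attains its minimum on [0,1] at t = 1, i.e., G(t) ≥ G(1) = 4^(1−s) / sin^(2s)(π/(2p)) for all t ∈ [0,1]. -/
/-!
Write `c = cos (π / p) ≤ 0`. Since `-c (1 - t)² ≥ 0`, the denominator satisfies
`1 + t² - 2tc ≤ 2 (1 - c) · (1 + t²) / 2`, and the power-mean inequality for the convex map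
`x ↦ x ^ (s / 2)` gives `((1 + t²) / 2) ^ s ≤ ((1 + t ^ s) / 2) ^ 2`. Together,
`G(t) ≥ 4 / (2 (1 - c)) ^ s = G(1)`, and `2 (1 - c) = 4 sin² (π / (2p))` evaluates `G(1)`.
-/

open Real

/-- The paper's `G`, with `c` standing for `cos (π / p)`. -/
noncomputable def G (c s t : ℝ) : ℝ := (1 + t ^ s) ^ 2 / (1 + t ^ 2 - 2 * t * c) ^ s

lemma one_add_div_two_rpow_le {x q : ℝ} (hx : 0 ≤ x) (hq : 1 ≤ q) :
    ((1 + x) / 2) ^ q ≤ (1 + x ^ q) / 2 := by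
  have h := (convexOn_rpow hq).2 (Set.mem_Ici.2 zero_le_one) (Set.mem_Ici.2 hx)
    (by norm_num : (0 : ℝ) ≤ 1 / 2) (by norm_num : (0 : ℝ) ≤ 1 / 2) (by norm_num)
  simp only [smul_eq_mul, one_rpow] at h
  calc ((1 + x) / 2) ^ q = (1 / 2 * 1 + 1 / 2 * x) ^ q := by congr 1; ring
    _ ≤ 1 / 2 * 1 + 1 / 2 * x ^ q := h
    _ = (1 + x ^ q) / 2 := by ring

lemma one_add_sq_div_two_rpow_le {s t : ℝ} (ht : 0 ≤ t) (hs : 2 ≤ s) :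
    ((1 + t ^ 2) / 2) ^ s ≤ ((1 + t ^ s) / 2) ^ 2 := by
  have hsq : (t ^ 2) ^ (s / 2) = t ^ s := by
    rw [← rpow_natCast_mul ht, Nat.cast_ofNat, mul_div_cancel₀ s two_ne_zero]
  have hmean := one_add_div_two_rpow_le (sq_nonneg t) (by linarith : 1 ≤ s / 2)
  rw [hsq] at hmean
  calc ((1 + t ^ 2) / 2) ^ s = (((1 + t ^ 2) / 2) ^ (s / 2)) ^ 2 := by
        rw [← rpow_mul_natCast (by positivity), Nat.cast_ofNat, div_mul_cancel₀ s two_ne_zero]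
    _ ≤ ((1 + t ^ s) / 2) ^ 2 := by gcongr

lemma G_one (c s : ℝ) : G c s 1 = 4 / (2 * (1 - c)) ^ s := by
  norm_num [G]
  ring_nf

lemma G_one_le {c s t : ℝ} (hc : c ≤ 0) (ht : 0 ≤ t) (hs : 2 ≤ s) : G c s 1 ≤ G c s t := by
  have hD : 0 < 1 + t ^ 2 - 2 * t * c := by nlinarith
  have hDle : 1 + t ^ 2 - 2 * t * c ≤ 2 * (1 - c) * ((1 + t ^ 2) / 2) := by
    nlinarith [mul_nonneg (neg_nonneg.2 hc) (sq_nonneg (1 - t))]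
  have hKpos : 0 < (2 * (1 - c)) ^ s := rpow_pos_of_pos (by linarith) s
  calc G c s 1 = (1 + t ^ s) ^ 2 / ((2 * (1 - c)) ^ s * ((1 + t ^ s) / 2) ^ 2) := by
        rw [G_one]
        field_simp
        ring
    _ ≤ (1 + t ^ s) ^ 2 / ((2 * (1 - c)) ^ s * ((1 + t ^ 2) / 2) ^ s) := by
        refine div_le_div_of_nonneg_left (by positivity) (by positivity) ?_
        exact mul_le_mul_of_nonneg_left (one_add_sq_div_two_rpow_le ht hs) hKpos.le
    _ = (1 + t ^ s) ^ 2 / (2 * (1 - c) * ((1 + t ^ 2) / 2)) ^ s := by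
        rw [← mul_rpow (by linarith) (by positivity)]
    _ ≤ G c s t := by
        unfold G
        gcongr

lemma two_mul_one_sub_cos (x : ℝ) : 2 * (1 - cos x) = 4 * sin (x / 2) ^ 2 := by
  have h := cos_two_mul_eq_one_sub (x / 2)
  rw [two_mul, add_halves] at h
  linarith

lemma four_div_four_mul_sq_rpow {x : ℝ} (hx : 0 ≤ x) (s : ℝ) :
    4 / (4 * x ^ 2) ^ s = (4 : ℝ) ^ (1 - s) / x ^ (2 * s) := by
  rw [mul_rpow (by norm_num) (sq_nonneg x), ← rpow_natCast, ← rpow_mul hx,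
    rpow_sub (by norm_num), rpow_one, div_div]
  norm_num

theorem G_min_at_one (p s : ℝ) (hp1 : 1 < p) (hp2 : p ≤ 2) (hs : 2 ≤ s)
    (t : ℝ) (ht : t ∈ Set.Icc (0 : ℝ) 1) :
    (1 + t ^ s) ^ 2 / (1 + t ^ 2 - 2 * t * Real.cos (π / p)) ^ s ≥
      (4 : ℝ) ^ (1 - s) / Real.sin (π / (2 * p)) ^ (2 * s) := by
  have hp0 : 0 < p := by linarith
  have hcos : cos (π / p) ≤ 0 := by
    apply cos_nonpos_of_pi_div_two_le_of_le
    · rw [div_le_div_iff₀ two_pos hp0]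
      nlinarith [pi_pos]
    · linarith [div_le_self pi_pos.le hp1.le, pi_pos]
  have hhalf : π / (2 * p) = π / p / 2 := by ring
  have hsin : 0 ≤ sin (π / (2 * p)) := by
    apply sin_nonneg_of_nonneg_of_le_pi (by positivity)
    rw [div_le_iff₀ (by positivity)]
    nlinarith [pi_pos]
  calc (4 : ℝ) ^ (1 - s) / sin (π / (2 * p)) ^ (2 * s)
      = G (cos (π / p)) s 1 := by
        rw [G_one, two_mul_one_sub_cos, ← hhalf, four_div_four_mul_sq_rpow hsin]
    _ ≤ G (cos (π / p)) s t := G_one_le hcos ht.1 hs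
end

section
/- Let 1 < p ≤ 2. The function g(t) = sin(pt) − p·cos(t)·sin((p−1)t) is nonnegative on [π/(2p), π/2]. In particular g'(t) = p(2−p)cos(t)cos((p−1)t) ≥ 0 on this interval and g(π/(2p)) = 1 − p·cos²(π/(2p)) ≥ 0. -/
/-! The derivative of `g(t) = sin (p t) - p cos t sin ((p - 1) t)` simplifies, via
`cos (p t) = cos t cos ((p - 1) t) - sin t sin ((p - 1) t)`, to `p (2 - p) cos t cos ((p - 1) t)`,
which is nonnegative on `[0, π/2]`; so `g` is monotone there and it suffices to check the left
endpoint. There `g(π/(2p)) = 1 - p cos² (π/(2p)) = 1 - p (1 + cos (π/p)) / 2`, and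
`cos (π/p) ≤ 0 ≤ 2/p - 1` because `π/p ∈ [π/2, π]`. -/

open Real

theorem hasDerivAt_sin_mul_sub_mul_cos_mul_sin (p t : ℝ) :
    HasDerivAt (fun u => sin (p * u) - p * cos u * sin ((p - 1) * u))
      (p * (2 - p) * cos t * cos ((p - 1) * t)) t := by
  have hsin_mul (a : ℝ) : HasDerivAt (fun u => sin (a * u)) (cos (a * t) * a) t := by
    simpa using ((hasDerivAt_id t).const_mul a).sin
  have hcos_mul : cos (p * t) = cos t * cos ((p - 1) * t) - sin t * sin ((p - 1) * t) := by
    rw [show p * t = t + (p - 1) * t by ring, cos_add]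
  have h := (hsin_mul p).sub (((hasDerivAt_cos t).const_mul p).mul (hsin_mul (p - 1)))
  rw [hcos_mul] at h
  exact h.congr_deriv (by ring)

theorem mul_two_sub_mul_cos_mul_cos_nonneg {p t : ℝ} (hp0 : 0 ≤ p) (hp2 : p ≤ 2)
    (ht : t ∈ Set.Icc 0 (π / 2)) :
    0 ≤ p * (2 - p) * cos t * cos ((p - 1) * t) := by
  obtain ⟨ht0, htπ⟩ := ht
  have hcos_t : 0 ≤ cos t := cos_nonneg_of_mem_Icc ⟨by linarith [pi_pos], htπ⟩
  have hcos_pt : 0 ≤ cos ((p - 1) * t) := cos_nonneg_of_mem_Icc ⟨by nlinarith, by nlinarith⟩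
  have hp : 0 ≤ p * (2 - p) := mul_nonneg hp0 (by linarith)
  positivity

theorem sin_mul_sub_mul_cos_mul_sin_pi_div_two_mul {p : ℝ} (hp : p ≠ 0) :
    sin (p * (π / (2 * p))) - p * cos (π / (2 * p)) * sin ((p - 1) * (π / (2 * p)))
      = 1 - p * cos (π / (2 * p)) ^ 2 := by
  have hpt : p * (π / (2 * p)) = π / 2 := by field_simp
  have hp1t : (p - 1) * (π / (2 * p)) = π / 2 - π / (2 * p) := by field_simp
  rw [hpt, hp1t, sin_pi_div_two, sin_pi_div_two_sub]
  ring

theorem one_sub_mul_cos_pi_div_two_mul_sq_nonneg {p : ℝ} (hp1 : 1 ≤ p) (hp2 : p ≤ 2) :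
    0 ≤ 1 - p * cos (π / (2 * p)) ^ 2 := by
  have hp0 : 0 < p := by linarith
  have hcos_sq : cos (π / (2 * p)) ^ 2 = 1 / 2 + cos (π / p) / 2 := by
    rw [cos_sq, show 2 * (π / (2 * p)) = π / p by field_simp]
  have hπp_le : π / p ≤ π := div_le_self pi_pos.le hp1
  have hle_πp : π / 2 ≤ π / p := div_le_div_of_nonneg_left pi_pos.le hp0 hp2
  have hcos_nonpos : cos (π / p) ≤ 0 := cos_nonpos_of_pi_div_two_le_of_le hle_πp (by linarith)
  rw [hcos_sq]
  nlinarith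

theorem g_nonneg_aux (p : ℝ) (hp1 : 1 < p) (hp2 : p ≤ 2) :
    (∀ t ∈ Set.Icc (π / (2 * p)) (π / 2),
        0 ≤ Real.sin (p * t) - p * Real.cos t * Real.sin ((p - 1) * t)) ∧
    (∀ t ∈ Set.Icc (π / (2 * p)) (π / 2),
        HasDerivAt (fun u => Real.sin (p * u) - p * Real.cos u * Real.sin ((p - 1) * u))
          (p * (2 - p) * Real.cos t * Real.cos ((p - 1) * t)) t ∧
        0 ≤ p * (2 - p) * Real.cos t * Real.cos ((p - 1) * t)) ∧
    Real.sin (p * (π / (2 * p))) - p * Real.cos (π / (2 * p)) * Real.sin ((p - 1) * (π / (2 * p)))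
      = 1 - p * Real.cos (π / (2 * p)) ^ 2 ∧
    0 ≤ 1 - p * Real.cos (π / (2 * p)) ^ 2 := by
  have hp0 : 0 < p := by linarith
  have hderiv := hasDerivAt_sin_mul_sub_mul_cos_mul_sin p
  have hsub : Set.Icc (π / (2 * p)) (π / 2) ⊆ Set.Icc 0 (π / 2) :=
    Set.Icc_subset_Icc_left (by positivity)
  have hderiv_nonneg (t : ℝ) (ht : t ∈ Set.Icc (π / (2 * p)) (π / 2)) :=
    mul_two_sub_mul_cos_mul_cos_nonneg hp0.le hp2 (hsub ht)
  have hleft := sin_mul_sub_mul_cos_mul_sin_pi_div_two_mul hp0.ne'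
  have hleft_nonneg := one_sub_mul_cos_pi_div_two_mul_sq_nonneg hp1.le hp2
  have hmono : MonotoneOn (fun u => sin (p * u) - p * cos u * sin ((p - 1) * u))
      (Set.Icc (π / (2 * p)) (π / 2)) :=
    monotoneOn_of_hasDerivWithinAt_nonneg (convex_Icc _ _)
      (fun t _ => (hderiv t).continuousAt.continuousWithinAt)
      (fun t _ => (hderiv t).hasDerivWithinAt)
      (fun t ht => hderiv_nonneg t (interior_subset ht))
  refine ⟨fun t ht => ?_, fun t ht => ⟨hderiv t, hderiv_nonneg t ht⟩, hleft, hleft_nonneg⟩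
  have hleft_mem : π / (2 * p) ∈ Set.Icc (π / (2 * p)) (π / 2) := ⟨le_rfl, ht.1.trans ht.2⟩
  exact (hleft ▸ hleft_nonneg).trans (hmono hleft_mem ht ht.1)
end

section
/- Let 1 < p ≤ 2. For every t ∈ (0, π/2], (1 − cot(π/(2p))·cos(pt)) / sin^p(t) ≥ 1 / sin^p(π/(2p)). -/
/-!
Put `a = π / (2p)` and `c = cot a`. The derivative of `φ s = (1 - c cos (p s)) / sin s ^ p` is
`p (c cos ((p - 1) s) - cos s) / sin s ^ (p + 1)`. Since `c (p - 1) ≤ 1` and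
`sin ((p - 1) s) ≤ sin s`, the bracket is increasing on `[0, π/2]`, and it vanishes at `s = a`
because `(p - 1) a = π/2 - a`. Hence `φ` decreases on `(0, a]` and increases on `[a, π/2]`, and
`φ a = 1 / sin a ^ p` because `p a = π/2`.
-/

open Real Set

theorem isMinOn_of_hasDerivAt_nonpos_nonneg {D : Set ℝ} (hD : Convex ℝ D) {f f' : ℝ → ℝ}
    {a : ℝ} (ha : a ∈ D) (hf : ∀ x ∈ D, HasDerivAt f (f' x) x)
    (hf'_nonpos : ∀ x ∈ D, x < a → f' x ≤ 0)
    (hf'_nonneg : ∀ x ∈ D, a < x → 0 ≤ f' x) : IsMinOn f D a := by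
  intro t ht
  have hcont {l r : ℝ} (hl : l ∈ D) (hr : r ∈ D) : ContinuousOn f (Icc l r) := fun x hx ↦
    (hf x (hD.ordConnected.out hl hr hx)).continuousAt.continuousWithinAt
  have hderiv {l r : ℝ} (hl : l ∈ D) (hr : r ∈ D) :
      ∀ x ∈ interior (Icc l r), HasDerivWithinAt f (f' x) (interior (Icc l r)) x := fun x hx ↦
    (hf x (hD.ordConnected.out hl hr (interior_subset hx))).hasDerivWithinAt
  rcases le_total t a with hta | hat
  · refine antitoneOn_of_hasDerivWithinAt_nonpos (convex_Icc t a) (hcont ht ha) (hderiv ht ha)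
      ?_ ⟨le_rfl, hta⟩ ⟨hta, le_rfl⟩ hta
    rw [interior_Icc]
    exact fun x hx ↦ hf'_nonpos x (hD.ordConnected.out ht ha (Ioo_subset_Icc_self hx)) hx.2
  · refine monotoneOn_of_hasDerivWithinAt_nonneg (convex_Icc a t) (hcont ha ht) (hderiv ha ht)
      ?_ ⟨le_rfl, hat⟩ ⟨hat, le_rfl⟩ hat
    rw [interior_Icc]
    exact fun x hx ↦ hf'_nonneg x (hD.ordConnected.out ha ht (Ioo_subset_Icc_self hx)) hx.1

theorem hasDerivAt_one_sub_mul_cos_div_sin_rpow (c p : ℝ) {s : ℝ} (hs : 0 < sin s) :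
    HasDerivAt (fun s ↦ (1 - c * cos (p * s)) / sin s ^ p)
      (p * (c * cos ((p - 1) * s) - cos s) / sin s ^ (p + 1)) s := by
  have hnum : HasDerivAt (fun s ↦ 1 - c * cos (p * s)) (c * sin (p * s) * p) s := by
    have := ((hasDerivAt_id' s).const_mul p).cos.const_mul c
    exact ((hasDerivAt_const s (1 : ℝ)).sub this).congr_deriv (by ring)
  have hden : HasDerivAt (fun s ↦ sin s ^ p) (cos s * p * sin s ^ (p - 1)) s :=
    (hasDerivAt_sin s).rpow_const (Or.inl hs.ne')
  refine (hnum.div hden (by positivity)).congr_deriv ?_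
  have hpow : sin s ^ p = sin s ^ (p - 1) * sin s := by
    rw [← rpow_add_one hs.ne']; ring_nf
  have hpow' : sin s ^ (p + 1) = sin s ^ (p - 1) * sin s * sin s := by
    rw [← hpow, rpow_add_one hs.ne']
  have : 0 < sin s ^ (p - 1) := by positivity
  rw [hpow, hpow', show (p - 1) * s = p * s - s by ring, cos_sub]
  field_simp
  ring

theorem monotoneOn_mul_cos_mul_sub_cos {c q : ℝ} (hq0 : 0 ≤ q) (hq1 : q ≤ 1)
    (hcq : c * q ≤ 1) : MonotoneOn (fun s ↦ c * cos (q * s) - cos s) (Icc 0 (π / 2)) := by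
  refine monotoneOn_of_hasDerivWithinAt_nonneg (f' := fun s ↦ sin s - c * (sin (q * s) * q))
    (convex_Icc _ _) (by fun_prop) (fun s _ ↦ ?_) (fun s hs ↦ ?_)
  · refine HasDerivAt.hasDerivWithinAt ?_
    exact ((((hasDerivAt_id' s).const_mul q).cos.const_mul c).sub
      (hasDerivAt_cos s)).congr_deriv (by ring)
  · rw [interior_Icc] at hs
    have hqs : 0 ≤ q * s := mul_nonneg hq0 hs.1.le
    have hqs_le : q * s ≤ s := mul_le_of_le_one_left hs.1.le hq1
    have hsin_nonneg : 0 ≤ sin (q * s) :=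
      sin_nonneg_of_nonneg_of_le_pi hqs (by linarith [hs.2, pi_pos])
    have hsin_le : sin (q * s) ≤ sin s :=
      sin_le_sin_of_le_of_le_pi_div_two (by linarith [pi_pos]) hs.2.le hqs_le
    nlinarith [mul_le_mul_of_nonneg_right hcq hsin_nonneg]

theorem cot_mul_sin {x : ℝ} (hx : sin x ≠ 0) : cot x * sin x = cos x := by
  rw [cot_eq_cos_div_sin, div_mul_cancel₀ _ hx]

theorem cot_le_one_of_mem_Icc {x : ℝ} (hx : x ∈ Icc (π / 4) (π / 2)) : cot x ≤ 1 := by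
  have hsin : 0 < sin x :=
    sin_pos_of_pos_of_lt_pi (by linarith [hx.1, pi_pos]) (by linarith [hx.2, pi_pos])
  rw [cot_eq_cos_div_sin, div_le_one hsin, ← sin_pi_div_two_sub]
  exact sin_le_sin_of_le_of_le_pi_div_two (by linarith [hx.2, pi_pos]) hx.2 (by linarith [hx.1])

theorem pi_div_two_mul_mem_Icc {p : ℝ} (hp1 : 1 ≤ p) (hp2 : p ≤ 2) :
    π / (2 * p) ∈ Icc (π / 4) (π / 2) := by
  constructor <;> rw [div_le_div_iff₀ (by positivity) (by positivity)] <;> nlinarith [pi_pos]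

theorem case_r_eq_one (p : ℝ) (hp1 : 1 < p) (hp2 : p ≤ 2)
    (t : ℝ) (ht1 : 0 < t) (ht2 : t ≤ π / 2) :
    (1 - Real.cot (π / (2 * p)) * Real.cos (p * t)) / Real.sin t ^ p ≥
      1 / Real.sin (π / (2 * p)) ^ p := by
  set a := π / (2 * p)
  have hp0 : 0 < p := by linarith
  have hpa : p * a = π / 2 := by simp only [a]; field_simp
  have ha : a ∈ Icc (π / 4) (π / 2) := pi_div_two_mul_mem_Icc hp1.le hp2
  have ha0 : 0 < a := by positivity
  have hsin : ∀ s ∈ Ioc 0 (π / 2), 0 < sin s := fun s hs ↦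
    sin_pos_of_pos_of_lt_pi hs.1 (by linarith [hs.2, pi_pos])
  have hu := monotoneOn_mul_cos_mul_sub_cos (q := p - 1) (by linarith) (by linarith)
    (mul_le_one₀ (cot_le_one_of_mem_Icc ha) (by linarith) (by linarith))
  have hua : cot a * cos ((p - 1) * a) - cos a = 0 := by
    rw [sub_mul, one_mul, hpa, cos_pi_div_two_sub, cot_mul_sin (hsin a ⟨ha0, ha.2⟩).ne',
      sub_self]
  have hmin : IsMinOn (fun s ↦ (1 - cot a * cos (p * s)) / sin s ^ p) (Ioc 0 (π / 2)) a := by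
    refine isMinOn_of_hasDerivAt_nonpos_nonneg (convex_Ioc _ _) ⟨ha0, ha.2⟩
      (fun s hs ↦ hasDerivAt_one_sub_mul_cos_div_sin_rpow _ _ (hsin s hs))
      (fun s hs hsa ↦ ?_) (fun s hs has ↦ ?_)
    · refine div_nonpos_of_nonpos_of_nonneg (mul_nonpos_of_nonneg_of_nonpos hp0.le ?_)
        (rpow_pos_of_pos (hsin s hs) _).le
      exact (hu ⟨hs.1.le, hs.2⟩ ⟨ha0.le, ha.2⟩ hsa.le).trans_eq hua
    · refine div_nonneg (mul_nonneg hp0.le ?_) (rpow_pos_of_pos (hsin s hs) _).le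
      exact hua.symm.trans_le (hu ⟨ha0.le, ha.2⟩ ⟨hs.1.le, hs.2⟩ has.le)
  simpa [hpa] using hmin ⟨ht1, ht2⟩
end

section
/- Let s ≥ p > 1 and p ≤ 2. Then for all t with 0 ≤ t ≤ π − π/p, (1 − 2/s)·sin((π − t)p/2) + sin(t + (π − t)p/2) ≥ 0. -/
/-! On `[0, π]` the sine lies above each of its chords ending at `(π, 0)`. With
`θ = (π - t) p / 2`, the chord from `θ` gives `sin (t + θ) ≥ (2 / p - 1) sin θ`, and
`1 - 2 / s ≥ 1 - 2 / p` together with `sin θ ≥ 0` absorbs the first term. -/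

open Real

namespace Real

lemma sub_mul_sin_le_sub_mul_sin {x y : ℝ} (hx : 0 ≤ x) (hxy : x ≤ y) (hy : y ≤ π) :
    (π - y) * sin x ≤ (π - x) * sin y := by
  rcases hxy.trans hy |>.eq_or_lt with rfl | hxπ
  · simp
  have hd : 0 < π - x := sub_pos.2 hxπ
  have hconc := strictConcaveOn_sin_Icc.concaveOn.2 ⟨hx, hxπ.le⟩ ⟨pi_pos.le, le_rfl⟩
    (div_nonneg (sub_nonneg.2 hy) hd.le : 0 ≤ (π - y) / (π - x))
    (div_nonneg (sub_nonneg.2 hxy) hd.le : 0 ≤ (y - x) / (π - x))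
    (by field_simp; ring)
  have hy_eq : (π - y) / (π - x) * x + (y - x) / (π - x) * π = y := by field_simp; ring
  simp only [smul_eq_mul, sin_pi, mul_zero, add_zero, hy_eq] at hconc
  rwa [div_mul_eq_mul_div, div_le_iff₀ hd, mul_comm (sin y)] at hconc

lemma mul_sin_le_sin_of_mul_sub_le {c x y : ℝ} (hx : 0 ≤ x) (hxy : x ≤ y) (hy : y ≤ π)
    (hc : c * (π - x) ≤ π - y) : c * sin x ≤ sin y := by
  rcases hxy.trans hy |>.eq_or_lt with rfl | hxπ
  · simpa using sin_nonneg_of_nonneg_of_le_pi (hx.trans hxy) hy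
  have hd : 0 < π - x := sub_pos.2 hxπ
  have hsinx : 0 ≤ sin x := sin_nonneg_of_nonneg_of_le_pi hx (hxy.trans hy)
  refine le_of_mul_le_mul_left ?_ hd
  calc (π - x) * (c * sin x) = c * (π - x) * sin x := by ring
    _ ≤ (π - y) * sin x := mul_le_mul_of_nonneg_right hc hsinx
    _ ≤ (π - x) * sin y := sub_mul_sin_le_sub_mul_sin hx hxy hy

end Real

theorem stationary_aux_small_p (p s : ℝ) (hp1 : 1 < p) (hp2 : p ≤ 2) (hs : p ≤ s)
    (t : ℝ) (ht1 : 0 ≤ t) (ht2 : t ≤ π - π / p) :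
    0 ≤ (1 - 2 / s) * Real.sin ((π - t) * p / 2) + Real.sin (t + (π - t) * p / 2) := by
  have hp0 : 0 < p := by linarith
  have hπt : π ≤ (π - t) * p := by rwa [le_sub_comm, div_le_iff₀ hp0] at ht2
  set θ := (π - t) * p / 2 with hθ
  have hθ0 : 0 ≤ θ := by nlinarith [pi_pos]
  have hθπ : t + θ ≤ π := by nlinarith
  have hchord : (2 / p - 1) * sin θ ≤ sin (t + θ) := by
    refine mul_sin_le_sin_of_mul_sub_le hθ0 (by linarith) hθπ ?_
    rw [div_sub_one hp0.ne', div_mul_eq_mul_div, div_le_iff₀ hp0]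
    nlinarith [mul_nonneg (sub_nonneg.2 hp2) (sub_nonneg.2 hπt)]
  have hcoef : 1 - 2 / p ≤ 1 - 2 / s := by gcongr
  have hsinθ : 0 ≤ sin θ := sin_nonneg_of_nonneg_of_le_pi hθ0 (by linarith)
  calc (0 : ℝ) = (1 - 2 / p) * sin θ + (2 / p - 1) * sin θ := by ring
    _ ≤ (1 - 2 / s) * sin θ + sin (t + θ) :=
      add_le_add (mul_le_mul_of_nonneg_right hcoef hsinθ) hchord
end

section
/- For real s with 1 < s ≤ 2 and all r ∈ (0, 1), (1 − r^(2−s)) / (r − r^(1−s)) ≥ 1 − 2/s. -/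
/-!
Multiplying numerator and denominator by `r ^ (s - 1)` turns the claim into
`(s - 2) * (1 - r ^ s) ≤ s * (r - r ^ (s - 1))`, i.e. `F 1 ≤ F r` for
`F x = (s - 2) * x ^ s - s * x ^ (s - 1) + s * x`. The function `F` is antitone on `(0, ∞)`:
up to the factor `s`, `-F' x = (s - 1) * x ^ (s - 2) + (2 - s) * x ^ (s - 1) - 1`, which is
nonnegative by weighted AM-GM since the weighted geometric mean of the two powers is `1`.
-/

open Real

lemma one_le_mul_rpow_sub_one_add_mul_rpow {a x : ℝ} (ha0 : 0 ≤ a) (ha1 : a ≤ 1) (hx : 0 < x) :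
    1 ≤ a * x ^ (a - 1) + (1 - a) * x ^ a := by
  have hgm := geom_mean_le_arith_mean2_weighted ha0 (sub_nonneg.2 ha1)
    (rpow_nonneg hx.le (a - 1)) (rpow_nonneg hx.le a) (add_sub_cancel a 1)
  have hprod : (x ^ (a - 1)) ^ a * (x ^ a) ^ (1 - a) = 1 := by
    rw [← rpow_mul hx.le, ← rpow_mul hx.le, ← rpow_add hx,
      show (a - 1) * a + a * (1 - a) = 0 by ring, rpow_zero]
  rwa [hprod] at hgm

lemma antitoneOn_rpow_combination {s : ℝ} (hs1 : 1 ≤ s) (hs2 : s ≤ 2) :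
    AntitoneOn (fun x : ℝ => (s - 2) * x ^ s - s * x ^ (s - 1) + s * x) (Set.Ioi 0) := by
  have hderiv : ∀ x ∈ Set.Ioi (0 : ℝ), HasDerivAt
      (fun x : ℝ => (s - 2) * x ^ s - s * x ^ (s - 1) + s * x)
      (-s * ((s - 1) * x ^ (s - 2) + (2 - s) * x ^ (s - 1) - 1)) x := by
    intro x hx
    have hx0 : x ≠ 0 := ne_of_gt hx
    have h1 := (hasDerivAt_rpow_const (p := s) (Or.inl hx0)).const_mul (s - 2)
    have h2 := (hasDerivAt_rpow_const (p := s - 1) (Or.inl hx0)).const_mul s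
    refine ((h1.sub h2).add ((hasDerivAt_id x).const_mul s)).congr_deriv ?_
    rw [show s - 1 - 1 = s - 2 by ring]
    ring
  refine antitoneOn_of_deriv_nonpos (convex_Ioi 0)
    (fun x hx => (hderiv x hx).continuousAt.continuousWithinAt) ?_ ?_ <;> rw [interior_Ioi]
  · exact fun x hx => (hderiv x hx).differentiableAt.differentiableWithinAt
  · intro x hx
    rw [(hderiv x hx).deriv]
    have hamgm := one_le_mul_rpow_sub_one_add_mul_rpow (a := s - 1) (by linarith) (by linarith) hx
    rw [show s - 1 - 1 = s - 2 by ring, show 1 - (s - 1) = 2 - s by ring] at hamgm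
    exact mul_nonpos_of_nonpos_of_nonneg (by linarith) (by linarith)

lemma one_sub_rpow_div_sub_rpow_eq {r : ℝ} (hr : 0 < r) (s : ℝ) :
    (1 - r ^ (2 - s)) / (r - r ^ (1 - s)) = (r - r ^ (s - 1)) / (1 - r ^ s) := by
  have hpos : 0 < r ^ (s - 1) := rpow_pos_of_pos hr _
  have hmul : ∀ t u v : ℝ, t + u = v → r ^ t * r ^ u = r ^ v := fun t u v h => by
    rw [← rpow_add hr, h]
  have h1 := hmul (s - 1) (2 - s) 1 (by ring)
  have h2 := hmul (s - 1) (1 - s) 0 (by ring)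
  have h3 := hmul (s - 1) 1 s (by ring)
  simp only [rpow_one, rpow_zero] at h1 h2 h3
  rw [← mul_div_mul_left _ _ hpos.ne', ← neg_div_neg_eq]
  congr 1
  · linear_combination h1
  · linear_combination h2 - h3

theorem ratio_ge (s : ℝ) (hs1 : 1 < s) (hs2 : s ≤ 2)
    (r : ℝ) (hr1 : 0 < r) (hr2 : r < 1) :
    (1 - r ^ (2 - s)) / (r - r ^ (1 - s)) ≥ 1 - 2 / s := by
  have hs0 : 0 < s := by linarith
  have hrs : r ^ s < 1 := rpow_lt_one hr1.le hr2 hs0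
  have hF := antitoneOn_rpow_combination hs1.le hs2 hr1 (Set.mem_Ioi.2 one_pos) hr2.le
  simp only [one_rpow, mul_one] at hF
  rw [ge_iff_le, one_sub_rpow_div_sub_rpow_eq hr1, le_div_iff₀ (sub_pos.2 hrs),
    one_sub_div hs0.ne', div_mul_eq_mul_div, div_le_iff₀ hs0]
  linarith
end

section
/- For 1 < p ≤ 2 and all r ∈ [0, 1], ((1−r)² + 2r·sin(π/(2p)))^(p/2) / (1 + r^p) ≤ 1. -/
/-!
Since `sin (π / (2p)) ≤ 1`, the base is at most `1 + r²`, and `t ↦ t ^ (p/2)` is subadditive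
on `[0, ∞)` for `p ≤ 2`, so `(1 + r²) ^ (p/2) ≤ 1 + r ^ p`.
-/

open Real

lemma sin_pi_div_two_mul_nonneg {p : ℝ} (hp : 1 / 2 ≤ p) : 0 ≤ sin (π / (2 * p)) := by
  apply sin_nonneg_of_nonneg_of_le_pi (by positivity)
  rw [div_le_iff₀ (by linarith)]
  nlinarith [pi_pos]

lemma one_add_sq_rpow_half_le {p r : ℝ} (hr : 0 ≤ r) (hp0 : 0 ≤ p) (hp2 : p ≤ 2) :
    (1 + r ^ 2) ^ (p / 2) ≤ 1 + r ^ p := by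
  have hsq : (r ^ 2) ^ (p / 2) = r ^ p := by
    rw [← rpow_natCast_mul hr, Nat.cast_ofNat, mul_div_cancel₀ p two_ne_zero]
  calc (1 + r ^ 2) ^ (p / 2) ≤ 1 ^ (p / 2) + (r ^ 2) ^ (p / 2) :=
        rpow_add_le_add_rpow zero_le_one (sq_nonneg r) (by positivity) (by linarith)
    _ = 1 + r ^ p := by rw [one_rpow, hsq]

theorem F_le_one (p : ℝ) (hp1 : 1 < p) (hp2 : p ≤ 2)
    (r : ℝ) (hr : r ∈ Set.Icc (0 : ℝ) 1) :
    ((1 - r) ^ 2 + 2 * r * Real.sin (π / (2 * p))) ^ (p / 2) / (1 + r ^ p) ≤ 1 := by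
  have hr0 : 0 ≤ r := hr.1
  have hs0 := sin_pi_div_two_mul_nonneg (p := p) (by linarith)
  have hs1 := sin_le_one (π / (2 * p))
  have hbase : (1 - r) ^ 2 + 2 * r * sin (π / (2 * p)) ≤ 1 + r ^ 2 := by nlinarith
  rw [div_le_one (by positivity)]
  calc ((1 - r) ^ 2 + 2 * r * sin (π / (2 * p))) ^ (p / 2) ≤ (1 + r ^ 2) ^ (p / 2) :=
        rpow_le_rpow (by positivity) hbase (by linarith)
    _ ≤ 1 + r ^ p := one_add_sq_rpow_half_le hr0 (by linarith) hp2
end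

section
/- For all real p with 4/3 ≤ p ≤ 2, (1 + cot(π/(2p)))^(1 − p/2) ≤ 2^(p−1) · sin^p(π/(2p)). -/
open Real Set

/-!
Put `θ = π / (2p) ∈ [π/4, 3π/8]` and `u = 2θ - π/2 ∈ [0, π/4]`. Since `1 + sin u = 2 sin² θ` and
`1 + sin u + cos u = 2 sin θ (sin θ + cos θ)`, the logarithm of the inequality, multiplied by `4θ`,
reads `logGap u ≥ 0`. Now `logGap 0 = 0`, `logGap (π/4) ≥ 0` amounts to
`2 (1 + √2) ≤ (1 + √2/2)³`, and `logGap` is concave on `[0, π/4]`: in its second derivative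
`logGapDeriv2` both summands are nonpositive as soon as `0 ≤ sin u ≤ cos u`.
-/

noncomputable def logGap (u : ℝ) : ℝ :=
  (π + 2 * u) * log (1 + sin u) - 2 * u * log (1 + sin u + cos u) - 2 * u * log 2

noncomputable def logGapDeriv (u : ℝ) : ℝ :=
  2 * log (1 + sin u) + (π + 2 * u) * (cos u / (1 + sin u))
    - (2 * log (1 + sin u + cos u) + 2 * u * ((cos u - sin u) / (1 + sin u + cos u))) - 2 * log 2

noncomputable def logGapDeriv2 (u : ℝ) : ℝ :=
  (4 * (1 + sin u) - π * (1 + sin u + cos u)) / ((1 + sin u) * (1 + sin u + cos u))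
    + 2 * u * (sin u - cos u) / (1 + sin u + cos u) ^ 2

lemma hasDerivAt_one_add_sin_add_cos (u : ℝ) :
    HasDerivAt (fun x => 1 + sin x + cos x) (cos u - sin u) u :=
  (((hasDerivAt_sin u).const_add 1).add (hasDerivAt_cos u)).congr_deriv (by ring)

lemma hasDerivAt_cos_div_one_add_sin {u : ℝ} (h : 1 + sin u ≠ 0) :
    HasDerivAt (fun x => cos x / (1 + sin x)) (-1 / (1 + sin u)) u := by
  refine ((hasDerivAt_cos u).div ((hasDerivAt_sin u).const_add 1) h).congr_deriv ?_
  field_simp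
  linear_combination -sin_sq_add_cos_sq u

lemma hasDerivAt_cos_sub_sin_div {u : ℝ} (h : 1 + sin u + cos u ≠ 0) :
    HasDerivAt (fun x => (cos x - sin x) / (1 + sin x + cos x))
      (-(2 + sin u + cos u) / (1 + sin u + cos u) ^ 2) u := by
  refine (((hasDerivAt_cos u).sub (hasDerivAt_sin u)).div
    (hasDerivAt_one_add_sin_add_cos u) h).congr_deriv ?_
  simp only [Pi.sub_apply]
  field_simp
  linear_combination -2 * sin_sq_add_cos_sq u

lemma hasDerivAt_logGap {u : ℝ} (hA : 1 + sin u ≠ 0) (hB : 1 + sin u + cos u ≠ 0) :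
    HasDerivAt logGap (logGapDeriv u) u := by
  have hmul : HasDerivAt (fun x => 2 * x) 2 u := by
    simpa using (hasDerivAt_id u).const_mul 2
  have := (((hmul.const_add π).mul (((hasDerivAt_sin u).const_add 1).log hA)).sub
    (hmul.mul ((hasDerivAt_one_add_sin_add_cos u).log hB))).sub (hmul.mul_const (log 2))
  refine this.congr_deriv ?_
  unfold logGapDeriv
  ring

lemma hasDerivAt_logGapDeriv {u : ℝ} (hA : 1 + sin u ≠ 0) (hB : 1 + sin u + cos u ≠ 0) :
    HasDerivAt logGapDeriv (logGapDeriv2 u) u := by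
  have hmul : HasDerivAt (fun x => 2 * x) 2 u := by
    simpa using (hasDerivAt_id u).const_mul 2
  have := ((((((hasDerivAt_sin u).const_add 1).log hA).const_mul 2).add
    ((hmul.const_add π).mul (hasDerivAt_cos_div_one_add_sin hA))).sub
    ((((hasDerivAt_one_add_sin_add_cos u).log hB).const_mul 2).add
      (hmul.mul (hasDerivAt_cos_sub_sin_div hB)))).sub_const (2 * log 2)
  refine this.congr_deriv ?_
  unfold logGapDeriv2
  field_simp
  linear_combination (4 * (1 + sin u + cos u) - 2 * u) * sin_sq_add_cos_sq u

lemma logGapDeriv2_neg {u : ℝ} (hu : 0 ≤ u) (hs : 0 ≤ sin u) (hsc : sin u ≤ cos u) :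
    logGapDeriv2 u < 0 := by
  have hA : 0 < 1 + sin u := by linarith
  have hB : 0 < 1 + sin u + cos u := by linarith
  have hc : 1 / 2 < cos u := by nlinarith [sin_sq_add_cos_sq u]
  -- `(4 - π) (1 + sin u) ≤ (4 - π) (1 + cos u) < π cos u`, as `cos u > 1/2` and `π > 3`
  have hnum : 4 * (1 + sin u) - π * (1 + sin u + cos u) < 0 := by
    nlinarith [pi_gt_three, pi_lt_four]
  exact add_neg_of_neg_of_nonpos (div_neg_of_neg_of_pos hnum (by positivity))
    (div_nonpos_of_nonpos_of_nonneg (by nlinarith) (by positivity))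

lemma sin_le_cos_of_le_pi_div_four {u : ℝ} (hu0 : 0 ≤ u) (hu : u ≤ π / 4) : sin u ≤ cos u := by
  rw [← cos_pi_div_two_sub]
  exact cos_le_cos_of_nonneg_of_le_pi hu0 (by linarith [pi_pos]) (by linarith)

lemma sin_nonneg_and_sin_le_cos {u : ℝ} (hu : u ∈ Icc 0 (π / 4)) : 0 ≤ sin u ∧ sin u ≤ cos u :=
  ⟨sin_nonneg_of_nonneg_of_le_pi hu.1 (by linarith [hu.2, pi_pos]),
    sin_le_cos_of_le_pi_div_four hu.1 hu.2⟩

lemma concaveOn_logGap : ConcaveOn ℝ (Icc 0 (π / 4)) logGap := by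
  have hderiv {u : ℝ} (hu : u ∈ Icc 0 (π / 4)) :
      HasDerivAt logGap (logGapDeriv u) u ∧ HasDerivAt logGapDeriv (logGapDeriv2 u) u := by
    obtain ⟨hs, hsc⟩ := sin_nonneg_and_sin_le_cos hu
    have hA : 1 + sin u ≠ 0 := by linarith
    have hB : 1 + sin u + cos u ≠ 0 := by linarith
    exact ⟨hasDerivAt_logGap hA hB, hasDerivAt_logGapDeriv hA hB⟩
  refine concaveOn_of_hasDerivWithinAt2_nonpos (f' := logGapDeriv) (f'' := logGapDeriv2)
    (convex_Icc _ _)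
    (fun u hu => (hderiv hu).1.continuousAt.continuousWithinAt) ?_ ?_ ?_ <;>
    intro u hu <;> rw [interior_Icc] at hu
  · exact (hderiv (Ioo_subset_Icc_self hu)).1.hasDerivWithinAt
  · exact (hderiv (Ioo_subset_Icc_self hu)).2.hasDerivWithinAt
  · obtain ⟨hs, hsc⟩ := sin_nonneg_and_sin_le_cos (Ioo_subset_Icc_self hu)
    exact (logGapDeriv2_neg hu.1.le hs hsc).le

lemma logGap_zero : logGap 0 = 0 := by simp [logGap]

lemma logGap_pi_div_four_nonneg : 0 ≤ logGap (π / 4) := by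
  have hr : √2 ^ 2 = 2 := sq_sqrt zero_le_two
  have hr2 : √2 ≤ 2 := by nlinarith [sqrt_nonneg 2]
  have hpow : 2 * (1 + √2) ≤ (1 + √2 / 2) ^ 3 := by nlinarith
  have hlog : log 2 + log (1 + √2) ≤ 3 * log (1 + √2 / 2) := by
    calc log 2 + log (1 + √2) = log (2 * (1 + √2)) := (log_mul two_ne_zero (by positivity)).symm
      _ ≤ log ((1 + √2 / 2) ^ 3) := log_le_log (by positivity) hpow
      _ = 3 * log (1 + √2 / 2) := by rw [log_pow]; norm_num
  have : logGap (π / 4) = π / 2 * (3 * log (1 + √2 / 2) - (log 2 + log (1 + √2))) := by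
    rw [logGap, sin_pi_div_four, cos_pi_div_four]
    ring_nf
  rw [this]
  exact mul_nonneg (by positivity) (by linarith)

lemma logGap_nonneg {u : ℝ} (hu : u ∈ Icc 0 (π / 4)) : 0 ≤ logGap u := by
  have hπ : 0 ≤ π / 4 := by positivity
  have := concaveOn_logGap.min_le_of_mem_Icc (left_mem_Icc.2 hπ) (right_mem_Icc.2 hπ) hu
  rwa [logGap_zero, min_eq_left logGap_pi_div_four_nonneg] at this

lemma logGap_two_mul_sub_pi_div_two {θ : ℝ} (hs : 0 < sin θ) (hsc : 0 < sin θ + cos θ) :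
    logGap (2 * θ - π / 2) = (π + 4 * θ) * log (sin θ) - (4 * θ - π) * log (sin θ + cos θ)
      + (2 * π - 4 * θ) * log 2 := by
  have hsin : sin (2 * θ - π / 2) = sin θ ^ 2 - cos θ ^ 2 := by
    rw [sin_sub_pi_div_two, cos_two_mul]; linear_combination -sin_sq_add_cos_sq θ
  have hcos : cos (2 * θ - π / 2) = 2 * sin θ * cos θ := by
    rw [cos_sub_pi_div_two, sin_two_mul]
  have hA : 1 + sin (2 * θ - π / 2) = 2 * sin θ ^ 2 := by
    rw [hsin]; linear_combination -sin_sq_add_cos_sq θ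
  have hB : 1 + sin (2 * θ - π / 2) + cos (2 * θ - π / 2) = 2 * sin θ * (sin θ + cos θ) := by
    rw [hsin, hcos]; linear_combination -sin_sq_add_cos_sq θ
  rw [logGap, hB, hA, log_mul (by positivity) hsc.ne', log_mul two_ne_zero hs.ne',
    log_mul two_ne_zero (by positivity), log_pow]
  push_cast
  ring

theorem ineq_five (p : ℝ) (hp1 : 4/3 ≤ p) (hp2 : p ≤ 2) :
    (1 + Real.cot (π / (2 * p))) ^ (1 - p / 2) ≤
      (2 : ℝ) ^ (p - 1) * Real.sin (π / (2 * p)) ^ p := by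
  set θ := π / (2 * p) with hθ
  have hp : 0 < p := by linarith
  have hθp : θ * p = π / 2 := by rw [hθ]; field_simp
  have hu : 2 * θ - π / 2 ∈ Icc 0 (π / 4) := by
    constructor <;> nlinarith [pi_pos]
  have hs : 0 < sin θ := sin_pos_of_pos_of_lt_pi (by positivity) (by nlinarith [pi_pos])
  have hc : 0 < cos θ := cos_pos_of_mem_Ioo ⟨by nlinarith [pi_pos], by nlinarith [pi_pos]⟩
  have hgap := logGap_nonneg hu
  rw [logGap_two_mul_sub_pi_div_two hs (by positivity)] at hgap
  rw [cot_eq_cos_div_sin, one_add_div hs.ne', ← log_le_log_iff (by positivity) (by positivity),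
    log_rpow (by positivity), log_mul (by positivity) (by positivity), log_rpow two_pos,
    log_rpow hs, log_div (by positivity) hs.ne']
  have hscale : p * ((π + 4 * θ) * log (sin θ) - (4 * θ - π) * log (sin θ + cos θ)
      + (2 * π - 4 * θ) * log 2) = 2 * π * ((p - 1) * log 2 + p * log (sin θ)
        - (1 - p / 2) * (log (sin θ + cos θ) - log (sin θ))) := by
    linear_combination (4 * log (sin θ) - 4 * log (sin θ + cos θ) - 4 * log 2) * hθp
  have := nonneg_of_mul_nonneg_right (hscale ▸ mul_nonneg hp.le hgap) (by positivity)
  linarith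
end

section
/- For all real p with 1 < p ≤ 4/3, 1 − 4 / (4^p · sin^(2p)(π/(2p))) ≥ cot²(π/(2p)). -/
/-!
Put `u = π / 2 - π / (2 p) ∈ (0, π / 8]`, so that `sin (π / (2 p)) = cos u`,
`cot (π / (2 p)) = tan u` and `p - 1 = 2 u / (π - 2 u)`. Since `1 - tan² u = cos 2u / cos² u`,
the inequality becomes `1 ≤ cos 2u · (4 cos² u) ^ (p - 1)`, i.e.
`0 ≤ log cos 2u + 2u / (π - 2u) · log (4 cos² u)`.
With `log cos x ≥ -(3/5) x²` on `[0, π/4]` this reduces to `(6/5) (π u - u²) ≤ log 4`,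
which holds because the left side is at most `(6/5) · 7π²/64 < 1.31 < log 4`.
-/

open Real

theorem exp_neg_le_one_sub_add_sq_div_two {t : ℝ} (ht : 0 ≤ t) :
    exp (-t) ≤ 1 - t + t ^ 2 / 2 := by
  have hpos : 0 < 1 + t + t ^ 2 / 2 := by positivity
  calc exp (-t) = 1 / exp t := by rw [exp_neg, one_div]
    _ ≤ 1 / (1 + t + t ^ 2 / 2) := one_div_le_one_div_of_le hpos (quadratic_le_exp_of_nonneg ht)
    _ ≤ 1 - t + t ^ 2 / 2 := by
      rw [div_le_iff₀ hpos]
      nlinarith [pow_nonneg ht 4]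

-- `Real.cos_bound` is too weak near `π / 4`; the half-angle formula with `Real.sin_bound` is not.
theorem exp_neg_mul_sq_le_cos {x : ℝ} (hx₀ : 0 ≤ x) (hx : x ≤ π / 4) :
    exp (-(3 / 5 * x ^ 2)) ≤ cos x := by
  obtain ⟨y, rfl⟩ : ∃ y, x = 2 * y := ⟨x / 2, by ring⟩
  have hy₀ : 0 ≤ y := by linarith
  have hy : y ≤ 2 / 5 := by linarith [pi_lt_d2]
  have hsin₀ : 0 ≤ sin y := sin_nonneg_of_nonneg_of_le_pi hy₀ (by linarith [pi_gt_three])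
  have hsin : sin y ≤ y - y ^ 3 / 6 + y ^ 5 / 100 := by
    have := sin_bound (x := y) (by rw [abs_of_nonneg hy₀]; linarith)
    rw [abs_of_nonneg hy₀] at this
    linarith [(abs_le.1 this).2]
  have hpoly : 2 * (y - y ^ 3 / 6 + y ^ 5 / 100) ^ 2
      ≤ 3 / 5 * (2 * y) ^ 2 - (3 / 5 * (2 * y) ^ 2) ^ 2 / 2 := by
    have hz : y ^ 2 ≤ 4 / 25 := by nlinarith
    nlinarith [pow_nonneg hy₀ 2, mul_nonneg (pow_nonneg hy₀ 4) (sub_nonneg.2 hz),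
      mul_nonneg (pow_nonneg hy₀ 6) (sub_nonneg.2 hz), mul_nonneg (pow_nonneg hy₀ 8) (sub_nonneg.2 hz)]
  calc exp (-(3 / 5 * (2 * y) ^ 2)) ≤ 1 - 3 / 5 * (2 * y) ^ 2 + (3 / 5 * (2 * y) ^ 2) ^ 2 / 2 :=
        exp_neg_le_one_sub_add_sq_div_two (by positivity)
    _ ≤ 1 - 2 * (y - y ^ 3 / 6 + y ^ 5 / 100) ^ 2 := by linarith
    _ ≤ 1 - 2 * sin y ^ 2 := by nlinarith [pow_le_pow_left₀ hsin₀ hsin 2]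
    _ = cos (2 * y) := by rw [cos_two_mul, cos_sq']; ring

theorem neg_mul_sq_le_log_cos {x : ℝ} (hx₀ : 0 ≤ x) (hx : x ≤ π / 4) :
    -(3 / 5 * x ^ 2) ≤ log (cos x) := by
  have hcos : 0 < cos x := cos_pos_of_mem_Ioo ⟨by linarith [pi_pos], by linarith [pi_pos]⟩
  exact (le_log_iff_exp_le hcos).2 (exp_neg_mul_sq_le_cos hx₀ hx)

theorem mul_pi_sub_sq_le_log_four {u : ℝ} (hu : u ≤ π / 8) :
    6 / 5 * (π * u - u ^ 2) ≤ log 4 := by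
  have hlog : log 4 = 2 * log 2 := by
    rw [show (4 : ℝ) = 2 ^ 2 by norm_num, log_pow, Nat.cast_ofNat]
  have hmax : π * u - u ^ 2 ≤ 7 * π ^ 2 / 64 := by
    nlinarith [mul_nonneg (sub_nonneg.2 hu) (by linarith [pi_pos] : (0 : ℝ) ≤ 7 * π / 8 - u)]
  nlinarith [log_two_gt_d9, pi_lt_d2, pi_pos]

theorem log_cos_two_mul_add_mul_log_nonneg {u : ℝ} (hu₀ : 0 ≤ u) (hu : u ≤ π / 8) :
    0 ≤ log (cos (2 * u)) + 2 * u / (π - 2 * u) * log (4 * cos u ^ 2) := by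
  have hpi := pi_gt_three
  have hden : 0 < π - 2 * u := by linarith
  have hcos : 0 < cos u := cos_pos_of_mem_Ioo ⟨by linarith, by linarith⟩
  have hlog : log 4 - 6 / 5 * u ^ 2 ≤ log (4 * cos u ^ 2) := by
    rw [log_mul (by norm_num) (by positivity), log_pow, Nat.cast_ofNat]
    linarith [neg_mul_sq_le_log_cos hu₀ (by linarith)]
  have hratio : 12 / 5 * u ^ 2 ≤ 2 * u / (π - 2 * u) * (log 4 - 6 / 5 * u ^ 2) := by
    rw [div_mul_eq_mul_div (2 * u), le_div_iff₀ hden]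
    nlinarith [mul_nonneg hu₀ (sub_nonneg.2 (mul_pi_sub_sq_le_log_four hu))]
  nlinarith [neg_mul_sq_le_log_cos (x := 2 * u) (by linarith) (by linarith),
    mul_le_mul_of_nonneg_left hlog (div_nonneg (by linarith : 0 ≤ 2 * u) hden.le)]

theorem one_le_cos_two_mul_mul_rpow {u : ℝ} (hu₀ : 0 ≤ u) (hu : u ≤ π / 8) :
    1 ≤ cos (2 * u) * (4 * cos u ^ 2) ^ (2 * u / (π - 2 * u)) := by
  have hpi := pi_gt_three
  have hcos : 0 < cos u := cos_pos_of_mem_Ioo ⟨by linarith, by linarith⟩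
  have hcos₂ : 0 < cos (2 * u) := cos_pos_of_mem_Ioo ⟨by linarith, by linarith⟩
  have hbase : 0 < 4 * cos u ^ 2 := by positivity
  rw [← log_nonneg_iff (mul_pos hcos₂ (rpow_pos_of_pos hbase _)),
    log_mul hcos₂.ne' (rpow_pos_of_pos hbase _).ne', log_rpow hbase]
  exact log_cos_two_mul_add_mul_log_nonneg hu₀ hu

theorem tan_sq_le_one_sub_div_rpow {u p : ℝ} (hcos : 0 < cos u)
    (h : 1 ≤ cos (2 * u) * (4 * cos u ^ 2) ^ (p - 1)) :
    tan u ^ 2 ≤ 1 - 4 / (4 * cos u ^ 2) ^ p := by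
  have hbase : 0 < 4 * cos u ^ 2 := by positivity
  have hsplit : (4 * cos u ^ 2) ^ p = (4 * cos u ^ 2) ^ (p - 1) * (4 * cos u ^ 2) := by
    rw [rpow_sub_one hbase.ne', div_mul_cancel₀ _ hbase.ne']
  have htan : tan u ^ 2 = 1 - cos (2 * u) / cos u ^ 2 := by
    rw [tan_eq_sin_div_cos, cos_two_mul, div_pow, sin_sq]
    field_simp
    ring
  rw [htan, hsplit, sub_le_sub_iff_left, div_le_div_iff₀ (by positivity) (by positivity)]
  nlinarith

theorem ineq_six (p : ℝ) (hp1 : 1 < p) (hp2 : p ≤ 4/3) :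
    1 - 4 / ((4 : ℝ) ^ p * Real.sin (π / (2 * p)) ^ (2 * p)) ≥
      Real.cot (π / (2 * p)) ^ 2 := by
  have hp : 0 < p := by linarith
  obtain ⟨u, hu_def⟩ : ∃ u, u = π / 2 - π / (2 * p) := ⟨_, rfl⟩
  have hu₀ : 0 ≤ u := by
    rw [hu_def, sub_nonneg, div_le_div_iff_of_pos_left pi_pos (by linarith) two_pos]; linarith
  have hu : u ≤ π / 8 := by
    rw [hu_def, sub_le_comm, le_div_iff₀ (by linarith)]; nlinarith [pi_pos]
  have hθ : π / (2 * p) = π / 2 - u := by rw [hu_def]; ring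
  have hp_sub : 2 * u / (π - 2 * u) = p - 1 := by
    rw [show π - 2 * u = π / p by rw [hu_def]; field_simp; ring, div_div_eq_mul_div, hu_def]
    field_simp
  have hcos : 0 < cos u := cos_pos_of_mem_Ioo ⟨by linarith [pi_pos], by linarith [pi_pos]⟩
  have hpow : (4 : ℝ) ^ p * cos u ^ (2 * p) = (4 * cos u ^ 2) ^ p := by
    rw [mul_rpow (by norm_num) (by positivity), rpow_mul hcos.le, rpow_two]
  rw [hθ, cot_eq_cos_div_sin, sin_pi_div_two_sub, cos_pi_div_two_sub, ← tan_eq_sin_div_cos, hpow,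
    ge_iff_le]
  exact tan_sq_le_one_sub_div_rpow hcos (hp_sub ▸ one_le_cos_two_mul_mul_rpow hu₀ hu)
end

section
/- For all x ∈ [0, 1/3], log((1−x²)/4) − (1 + (2/π)x)·log((1+x²)/4) ≥ 0. -/
/-! Write `g₁(x) = u · (-log((1+x²)/4)) - log((1+x²)/(1-x²))` with `u = 2x/π`. On `[0, 1/3]` the first
factor is at least `log(18/5) > 3π/8`, so the first term is at least `3x/4`, while `log y ≤ y - 1` bounds
the second term by `2x²/(1-x²) ≤ 9x²/4 ≤ 3x/4`. -/

open Real

lemma log_one_add_div_one_sub_le {t : ℝ} (ht₀ : -1 < t) (ht₁ : t < 1) :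
    log ((1 + t) / (1 - t)) ≤ 2 * t / (1 - t) := by
  have hpos : 0 < 1 - t := by linarith
  calc log ((1 + t) / (1 - t)) ≤ (1 + t) / (1 - t) - 1 :=
        log_le_sub_one_of_pos (div_pos (by linarith) hpos)
    _ = 2 * t / (1 - t) := by field_simp; ring

lemma exp_six_fifths_lt : exp (6 / 5) < 18 / 5 := by
  have h₁ : exp (1 / 5) ≤ 5 / 4 := by
    convert exp_bound_div_one_sub_of_interval (x := 1 / 5) (by norm_num) (by norm_num) using 1
    norm_num
  calc exp (6 / 5) = exp 1 * exp (1 / 5) := by rw [← exp_add]; norm_num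
    _ < 2.7182818286 * (5 / 4) := mul_lt_mul exp_one_lt_d9 h₁ (exp_pos _) (by norm_num)
    _ < 18 / 5 := by norm_num

lemma three_mul_pi_div_eight_lt_log : 3 * π / 8 < log (18 / 5) := by
  have hπ := pi_lt_d2
  calc 3 * π / 8 < 6 / 5 := by linarith
    _ < log (18 / 5) := (lt_log_iff_exp_lt (by norm_num)).2 exp_six_fifths_lt

theorem g1_nonneg (x : ℝ) (hx : x ∈ Set.Icc (0 : ℝ) (1/3 : ℝ)) :
    0 ≤ Real.log ((1 - x ^ 2) / 4) - (1 + (2 / π) * x) * Real.log ((1 + x ^ 2) / 4) := by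
  obtain ⟨hx₀, hx₁⟩ := hx
  have hsq : x ^ 2 ≤ 1 / 9 := by nlinarith
  have hquot : log ((1 + x ^ 2) / (1 - x ^ 2)) ≤ 9 / 4 * x ^ 2 :=
    calc log ((1 + x ^ 2) / (1 - x ^ 2)) ≤ 2 * x ^ 2 / (1 - x ^ 2) :=
          log_one_add_div_one_sub_le (by linarith [sq_nonneg x]) (by linarith)
      _ ≤ 9 / 4 * x ^ 2 := by rw [div_le_iff₀ (by linarith)]; nlinarith [sq_nonneg x]
  have hfactor : 3 * π / 8 ≤ -log ((1 + x ^ 2) / 4) := by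
    rw [← log_inv, inv_div]
    refine three_mul_pi_div_eight_lt_log.le.trans (log_le_log (by norm_num) ?_)
    rw [le_div_iff₀ (by positivity)]
    linarith
  have hsplit : log ((1 - x ^ 2) / 4) - (1 + 2 / π * x) * log ((1 + x ^ 2) / 4)
      = 2 / π * x * -log ((1 + x ^ 2) / 4) - log ((1 + x ^ 2) / (1 - x ^ 2)) := by
    have ha : 1 - x ^ 2 ≠ 0 := by linarith
    have hb : 1 + x ^ 2 ≠ 0 := by positivity
    rw [log_div ha four_ne_zero, log_div hb four_ne_zero, log_div hb ha]
    ring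
  have hu : 2 / π * x * (3 * π / 8) = 3 / 4 * x := by field_simp; ring
  rw [hsplit]
  nlinarith [mul_le_mul_of_nonneg_left hfactor (by positivity : 0 ≤ 2 / π * x)]
end

section
/- For p ≥ 9 and all r ∈ [0, 1], (1+r)^p / (2^p · cos^p(π/(2p))) − ((1 + r^(p/(p−1)))/2)^(p−1) − r^(p/2) · tan(π/(2p)) ≤ 0. -/
open Real

/-!
Put `θ = π / (2p)` and `s = p / (p - 1)`. Writing `r = e^{-2t}` turns `(1 + r) / 2` into
`e^{-t} cosh t`, and after cancelling `e^{-pt}` the claim reads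
`(cosh t / cos θ)^p ≤ cosh (s t)^(p-1) + tan θ`.
Since `log cosh` is convex with slope `tanh`, `cosh (s t)^(p-1) ≥ cosh t^(p-1) e^{t tanh t}`,
so it suffices that `e^A ≤ e^G + tan θ · cosh t^(-p)` with `A = -p log cos θ ≤ 1.2528 / p`
and `G = t tanh t - log cosh t`. This is clear if `A ≤ G`. Otherwise `G < 0.14`, which forces
`t < 0.58`; there `log cosh t ≤ 1.12 G`, and everything reduces to the one-variable bound
`1.3456 - x ≤ 1.5707 e^{-1.12 x}` at `x = p G ≤ 1.2528`.
-/

/- Taylor polynomials in `w = t ^ 2`; the last coefficient of `coshPoly` absorbs the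
remainder term of `Real.exp_bound` at order 8. -/
noncomputable def coshPoly (w : ℝ) : ℝ := 1 + w / 2 + w ^ 2 / 24 + w ^ 3 / 720 + w ^ 4 / 35840

noncomputable def sinhPoly (w : ℝ) : ℝ := 1 + w / 6 + w ^ 2 / 120

noncomputable def logCoshPoly (w : ℝ) : ℝ := w / 2 - w ^ 2 / 12 + w ^ 3 / 45

lemma coshPoly_pos {w : ℝ} (hw : 0 ≤ w) : 0 < coshPoly w := by
  unfold coshPoly; positivity

lemma coshPoly_le {w : ℝ} (h0 : 0 ≤ w) (h1 : w ≤ 0.64) :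
    coshPoly w ≤ 1 + logCoshPoly w + logCoshPoly w ^ 2 / 2 + logCoshPoly w ^ 3 / 6 := by
  have hv : 0 ≤ 0.64 - w := by linarith
  unfold coshPoly logCoshPoly
  nlinarith [mul_nonneg h0 hv, mul_nonneg (pow_nonneg h0 2) hv, mul_nonneg (pow_nonneg h0 3) hv,
    mul_nonneg (pow_nonneg h0 4) hv, mul_nonneg (pow_nonneg h0 5) hv,
    mul_nonneg (pow_nonneg h0 6) hv, mul_nonneg (pow_nonneg h0 7) hv,
    mul_nonneg (pow_nonneg h0 8) hv, pow_nonneg h0 5]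

lemma coshPoly_mul_logCoshPoly_le {w : ℝ} (h0 : 0 ≤ w) (h1 : w ≤ 0.3364) :
    coshPoly w * logCoshPoly w ≤ 28 / 53 * (w * sinhPoly w) := by
  have hv : 0 ≤ 0.3364 - w := by linarith
  unfold coshPoly logCoshPoly sinhPoly
  nlinarith [mul_nonneg h0 hv, mul_nonneg (pow_nonneg h0 2) hv, mul_nonneg (pow_nonneg h0 3) hv,
    mul_nonneg (pow_nonneg h0 4) hv, mul_nonneg (pow_nonneg h0 5) hv,
    mul_nonneg (pow_nonneg h0 6) hv, pow_nonneg h0 2, pow_nonneg h0 3]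

lemma coshPoly_mul_logCoshPoly_add_le {w : ℝ} (h0 : 0.3364 ≤ w) (h1 : w ≤ 0.64) :
    coshPoly w * (logCoshPoly w + 0.1393) ≤ w * sinhPoly w := by
  have hu : 0 ≤ w - 0.3364 := by linarith
  have hv : 0 ≤ 0.64 - w := by linarith
  unfold coshPoly logCoshPoly sinhPoly
  nlinarith [mul_nonneg hu hv, mul_nonneg (pow_nonneg hu 2) hv, mul_nonneg (pow_nonneg hu 3) hv,
    mul_nonneg (pow_nonneg hu 4) hv, mul_nonneg (pow_nonneg hu 5) hv,
    mul_nonneg (pow_nonneg hu 6) hv, pow_nonneg hu 2, pow_nonneg hu 3]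

lemma cosh_le_coshPoly {t : ℝ} (ht : |t| ≤ 1) : cosh t ≤ coshPoly (t ^ 2) := by
  have hexp : ∀ x : ℝ, |x| ≤ 1 → exp x ≤ 1 + x + x ^ 2 / 2 + x ^ 3 / 6 + x ^ 4 / 24
      + x ^ 5 / 120 + x ^ 6 / 720 + x ^ 7 / 5040 + x ^ 8 / 35840 := by
    intro x hx
    have h := (abs_le.1 (exp_bound hx (n := 8) (by norm_num))).2
    rw [pow_abs, abs_of_nonneg (by positivity : 0 ≤ x ^ 8)] at h
    norm_num [Finset.sum_range_succ, Nat.factorial] at h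
    linarith
  have h1 := hexp t ht
  have h2 := hexp (-t) (by rwa [abs_neg])
  rw [cosh_eq, coshPoly]
  linarith [show (-t) ^ 8 = t ^ 8 by ring, show (-t) ^ 7 = -t ^ 7 by ring]

lemma mul_sinhPoly_le_sinh {t : ℝ} (ht : 0 ≤ t) : t * sinhPoly (t ^ 2) ≤ sinh t := by
  have h := sum_le_hasSum (Finset.range 3) (fun i _ => by positivity) (hasSum_sinh t)
  norm_num [Finset.sum_range_succ, Nat.factorial] at h
  rw [sinhPoly]
  linarith

lemma log_cosh_le_logCoshPoly {t : ℝ} (ht : |t| ≤ 0.8) :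
    log (cosh t) ≤ logCoshPoly (t ^ 2) := by
  have hw : t ^ 2 ≤ 0.64 := by nlinarith [sq_abs t, abs_nonneg t]
  have hg : 0 ≤ logCoshPoly (t ^ 2) := by
    unfold logCoshPoly; nlinarith [sq_nonneg t, pow_nonneg (sq_nonneg t) 3]
  rw [log_le_iff_le_exp (cosh_pos t)]
  calc cosh t ≤ coshPoly (t ^ 2) := cosh_le_coshPoly (by linarith)
    _ ≤ _ := coshPoly_le (sq_nonneg t) hw
    _ ≤ exp (logCoshPoly (t ^ 2)) := by
      have h := sum_le_exp_of_nonneg hg 4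
      norm_num [Finset.sum_range_succ, Nat.factorial] at h
      linarith

lemma mul_sinhPoly_div_coshPoly_le_tanh {t : ℝ} (h0 : 0 ≤ t) (h1 : t ≤ 1) :
    t * sinhPoly (t ^ 2) / coshPoly (t ^ 2) ≤ tanh t := by
  rw [tanh_eq_sinh_div_cosh]
  exact div_le_div₀ (sinh_nonneg_iff.2 h0) (mul_sinhPoly_le_sinh h0) (cosh_pos t)
    (cosh_le_coshPoly (abs_le.2 ⟨by linarith, h1⟩))

lemma one_add_exp_neg_two_mul (t : ℝ) : 1 + exp (-(2 * t)) = 2 * exp (-t) * cosh t := by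
  have h : exp (-t) * exp t = 1 := by rw [← exp_add]; simp
  rw [cosh_eq, show -(2 * t) = -t + -t by ring, exp_add]
  linear_combination -h

lemma cosh_mul_exp_le_cosh (t y : ℝ) : cosh t * exp ((y - t) * tanh t) ≤ cosh y := by
  have h := exp_mul_le_cosh_add_mul_sinh (abs_tanh_lt_one t).le (y - t)
  have hc := cosh_pos t
  calc cosh t * exp ((y - t) * tanh t)
      ≤ cosh t * (cosh (y - t) + tanh t * sinh (y - t)) := by rw [mul_comm (y - t)]; gcongr
    _ = cosh (t + (y - t)) := by rw [cosh_add, tanh_eq_sinh_div_cosh]; field_simp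
    _ = cosh y := by rw [add_sub_cancel]

lemma log_cosh_le_mul_tanh_sub_log_cosh {t : ℝ} (h0 : 0 ≤ t) (h1 : t ≤ 0.58) :
    25 * log (cosh t) ≤ 28 * (t * tanh t - log (cosh t)) := by
  have hC := coshPoly_pos (sq_nonneg t)
  have hpoly := coshPoly_mul_logCoshPoly_le (sq_nonneg t) (by nlinarith)
  have hL := log_cosh_le_logCoshPoly (t := t) (abs_le.2 ⟨by linarith, by linarith⟩)
  have hT := mul_le_mul_of_nonneg_left (mul_sinhPoly_div_coshPoly_le_tanh h0 (by linarith)) h0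
  have hG : logCoshPoly (t ^ 2) ≤ 28 / 53 * (t * (t * sinhPoly (t ^ 2) / coshPoly (t ^ 2))) := by
    rw [mul_div_assoc', mul_div_assoc', le_div_iff₀ hC]
    linarith
  linarith

lemma le_mul_tanh_sub_log_cosh_of_le {t : ℝ} (h0 : 0.58 ≤ t) (h1 : t ≤ 0.8) :
    0.1393 ≤ t * tanh t - log (cosh t) := by
  have hC := coshPoly_pos (sq_nonneg t)
  have hpoly := coshPoly_mul_logCoshPoly_add_le (w := t ^ 2) (by nlinarith) (by nlinarith)
  have hL := log_cosh_le_logCoshPoly (t := t) (abs_le.2 ⟨by linarith, h1⟩)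
  have hT := mul_le_mul_of_nonneg_left
    (mul_sinhPoly_div_coshPoly_le_tanh (t := t) (by linarith) (by linarith)) (by linarith : 0 ≤ t)
  have hG : logCoshPoly (t ^ 2) + 0.1393 ≤ t * (t * sinhPoly (t ^ 2) / coshPoly (t ^ 2)) := by
    rw [mul_div_assoc', le_div_iff₀ hC]
    linarith
  linarith

/- With `u = e^{-2t}` one has `t tanh t - log cosh t = log 2 - log (1 + u) - 2tu / (1 + u)`,
which is at least `log 2 - (1 + 2t) u`. -/
lemma le_mul_tanh_sub_log_cosh_of_ge {t : ℝ} (ht : 0.8 ≤ t) :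
    0.1393 ≤ t * tanh t - log (cosh t) := by
  set u := exp (-(2 * t)) with hu
  have hu0 : 0 < u := exp_pos _
  have he : exp (-t) * exp t = 1 := by rw [← exp_add]; simp
  have hcosh : cosh t = exp t * ((1 + u) / 2) := by
    rw [hu, one_add_exp_neg_two_mul]
    linear_combination (-cosh t) * he
  have htanh : tanh t = (1 - u) / (1 + u) := by
    rw [tanh_eq_sinh_div_cosh, hcosh, sinh_eq, hu, show -(2 * t) = -t + -t by ring, exp_add]
    field_simp
    linear_combination exp (-t) * he
  have hlog : log (cosh t) = t + log ((1 + u) / 2) := by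
    rw [hcosh, log_mul (exp_pos t).ne' (by positivity), log_exp]
  have hdecay : (1 + 2 * t) * u ≤ 0.54 := by
    have hlin : 1 + 2 * t ≤ 2.6 * exp (2 * t - 1.6) := by
      linarith [add_one_le_exp (2 * t - 1.6)]
    have hexp : 4.835 ≤ exp 1.6 := by
      have h := sum_le_exp_of_nonneg (by norm_num : (0 : ℝ) ≤ 1.6) 5
      norm_num [Finset.sum_range_succ, Nat.factorial] at h
      linarith
    have hsplit : exp (2 * t - 1.6) * u * exp 1.6 = 1 := by
      rw [hu, ← exp_add, ← exp_add, show 2 * t - 1.6 + -(2 * t) + 1.6 = 0 by ring, exp_zero]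
    have hEu : exp (2 * t - 1.6) * u * 4.835 ≤ 1 := by
      nlinarith [mul_pos (exp_pos (2 * t - 1.6)) hu0]
    nlinarith [mul_le_mul_of_nonneg_right hlin hu0.le]
  have hlog1 : log ((1 + u) / 2) ≤ u - log 2 := by
    rw [log_div (by positivity) two_ne_zero]
    linarith [log_le_sub_one_of_pos (by positivity : 0 < 1 + u)]
  have htanh1 : 1 - 2 * u ≤ tanh t := by
    rw [htanh, le_div_iff₀ (by positivity)]
    nlinarith
  nlinarith [log_two_gt_d9]

lemma le_mul_tanh_sub_log_cosh {t : ℝ} (ht : 0.58 ≤ t) :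
    0.1393 ≤ t * tanh t - log (cosh t) := by
  rcases le_total t 0.8 with h | h
  · exact le_mul_tanh_sub_log_cosh_of_le ht h
  · exact le_mul_tanh_sub_log_cosh_of_ge h

lemma exp_le_one_add_mul {a : ℝ} (h0 : 0 ≤ a) (h1 : a ≤ 0.1392) :
    exp a ≤ 1 + 1.074 * a := by
  have h := exp_bound' h0 (by linarith) (n := 3) (by norm_num)
  norm_num [Finset.sum_range_succ, Nat.factorial] at h
  nlinarith [pow_nonneg h0 3]

lemma sub_le_mul_exp_neg {x : ℝ} (h0 : 0 ≤ x) (h1 : x ≤ 1.2528) :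
    1.3456 - x ≤ 1.5707 * exp (-(1.12 * x)) := by
  have hv : 0 ≤ 1.2528 - x := by linarith
  calc 1.3456 - x ≤ 1.5707 * (1 - 1.12 * x / 8) ^ 8 := by
        nlinarith [mul_nonneg h0 hv, mul_nonneg (pow_nonneg h0 2) hv,
          mul_nonneg (pow_nonneg h0 3) hv, mul_nonneg (pow_nonneg h0 4) hv,
          mul_nonneg (pow_nonneg h0 5) hv, mul_nonneg (pow_nonneg h0 6) hv,
          mul_nonneg (pow_nonneg h0 7) hv, sq_nonneg (x - 0.5), sq_nonneg (x - 1)]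
    _ ≤ 1.5707 * exp (-(1.12 * x)) := by
        gcongr
        exact one_sub_div_pow_le_exp_neg (n := 8) (by push_cast; linarith)

lemma exp_le_exp_add_mul_exp_neg {p A G L τ : ℝ} (hp : 9 ≤ p) (hA : 0 ≤ A)
    (hpA : p * A ≤ 1.2528) (hτ : 1.5707 ≤ p * τ) (hL : 0 ≤ L) (hLG : 25 * L ≤ 28 * G)
    (hGA : G ≤ A) :
    exp A ≤ exp G + τ * exp (-(p * L)) := by
  have hp0 : 0 < p := by linarith
  have hG : 0 ≤ G := by linarith
  have hpG : p * G ≤ 1.2528 := by nlinarith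
  have hA' : exp A ≤ 1 + 1.074 * A := exp_le_one_add_mul hA (by nlinarith)
  have hG' : 1 + G ≤ exp G := by linarith [add_one_le_exp G]
  have hψ := sub_le_mul_exp_neg (mul_nonneg hp0.le hG) hpG
  have hdecay : exp (-(1.12 * (p * G))) ≤ exp (-(p * L)) := exp_le_exp.2 (by nlinarith)
  have hτL : 1.5707 * exp (-(p * L)) ≤ p * (τ * exp (-(p * L))) := by
    rw [← mul_assoc]; exact mul_le_mul_of_nonneg_right hτ (exp_pos _).le
  refine le_of_mul_le_mul_left ?_ hp0
  nlinarith

lemma neg_log_cos_le {θ : ℝ} (hθ : θ ^ 2 < 2) :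
    -log (cos θ) ≤ θ ^ 2 / 2 / (1 - θ ^ 2 / 2) := by
  have hu : 0 < 1 - θ ^ 2 / 2 := by linarith
  have h1 : log (1 - θ ^ 2 / 2) ≤ log (cos θ) := log_le_log hu one_sub_sq_div_two_le_cos
  have h2 := one_sub_inv_le_log_of_pos hu
  have h3 : θ ^ 2 / 2 / (1 - θ ^ 2 / 2) = (1 - θ ^ 2 / 2)⁻¹ - 1 := by
    rw [div_eq_iff hu.ne', sub_mul, inv_mul_cancel₀ hu.ne']; ring
  linarith

lemma cos_pi_div_pos {p : ℝ} (hp : 1 < p) : 0 < cos (π / (2 * p)) := by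
  have hp0 : 0 < p := by linarith
  apply cos_pos_of_mem_Ioo
  constructor
  · have : 0 < π / (2 * p) := by positivity
    linarith [pi_pos]
  · exact div_lt_div_of_pos_left pi_pos (by norm_num) (by linarith)

lemma sq_mul_neg_log_cos_pi_div_le {p : ℝ} (hp : 9 ≤ p) :
    p ^ 2 * -log (cos (π / (2 * p))) ≤ 1.2528 := by
  have hp0 : 0 < p := by linarith
  have hθ0 : 0 < π / (2 * p) := by positivity
  have hθ1 : π / (2 * p) ≤ 0.17454 := by
    rw [div_le_iff₀ (by positivity)]
    nlinarith [pi_lt_d6]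
  have hθ : (π / (2 * p)) ^ 2 / 2 ≤ 0.01524 := by nlinarith
  have hpθ : p ^ 2 * ((π / (2 * p)) ^ 2 / 2) = π ^ 2 / 8 := by field_simp; ring
  have h := neg_log_cos_le (θ := π / (2 * p)) (by linarith)
  calc p ^ 2 * -log (cos (π / (2 * p)))
      ≤ p ^ 2 * ((π / (2 * p)) ^ 2 / 2 / (1 - (π / (2 * p)) ^ 2 / 2)) := by gcongr
    _ = π ^ 2 / 8 / (1 - (π / (2 * p)) ^ 2 / 2) := by rw [← hpθ, mul_div_assoc]
    _ ≤ 1.2528 := by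
      rw [div_le_iff₀ (by linarith)]
      nlinarith [pi_lt_d6, pi_pos]

lemma le_mul_tan_pi_div {p : ℝ} (hp : 1 < p) : 1.5707 ≤ p * tan (π / (2 * p)) := by
  have hp0 : 0 < p := by linarith
  have hθ : π / (2 * p) < π / 2 := by
    apply div_lt_div_of_pos_left pi_pos (by norm_num) (by linarith)
  have htan := lt_tan (by positivity) hθ
  have hpθ : p * (π / (2 * p)) = π / 2 := by field_simp
  nlinarith [pi_gt_d6]

lemma half_le_cos_pi_div_rpow {p : ℝ} (hp : 9 ≤ p) : 1 / 2 ≤ cos (π / (2 * p)) ^ p := by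
  have hcos : 0 < cos (π / (2 * p)) := cos_pi_div_pos (by linarith)
  have hA := sq_mul_neg_log_cos_pi_div_le hp
  rw [rpow_def_of_pos hcos]
  nlinarith [add_one_le_exp (log (cos (π / (2 * p))) * p)]

lemma one_div_two_rpow_mul_cos_rpow_le {p : ℝ} (hp : 9 ≤ p) :
    1 / (2 ^ p * cos (π / (2 * p)) ^ p) ≤ (1 / 2) ^ (p - 1) := by
  have hc := half_le_cos_pi_div_rpow hp
  have h2 := rpow_pos_of_pos zero_lt_two p
  rw [div_rpow zero_le_one zero_le_two, one_rpow, rpow_sub_one two_ne_zero,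
    div_le_div_iff₀ (by positivity) (by positivity)]
  nlinarith

lemma exp_neg_mul_log_cos_pi_div_le {p t : ℝ} (hp : 9 ≤ p) (ht : 0 ≤ t) :
    exp (-(p * log (cos (π / (2 * p))))) ≤
      exp (t * tanh t - log (cosh t)) + tan (π / (2 * p)) * exp (-(p * log (cosh t))) := by
  have hp0 : 0 < p := by linarith
  have hτ := le_mul_tan_pi_div (by linarith : 1 < p)
  have hA : 0 ≤ -(p * log (cos (π / (2 * p)))) := by
    have h : log (cos (π / (2 * p))) ≤ 0 := by
      rw [← log_abs]; exact log_nonpos (abs_nonneg _) (abs_cos_le_one _)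
    nlinarith
  have hpA : p * -(p * log (cos (π / (2 * p)))) ≤ 1.2528 := by
    linarith [sq_mul_neg_log_cos_pi_div_le hp]
  rcases le_or_gt (-(p * log (cos (π / (2 * p))))) (t * tanh t - log (cosh t)) with h | h
  · have hτ0 : 0 < tan (π / (2 * p)) := by nlinarith
    exact le_add_of_le_of_nonneg (exp_le_exp.2 h) (by positivity)
  · have ht' : t ≤ 0.58 := by
      by_contra! h'
      nlinarith [le_mul_tanh_sub_log_cosh h'.le]
    exact exp_le_exp_add_mul_exp_neg hp hA hpA hτ (log_nonneg (one_le_cosh t))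
      (log_cosh_le_mul_tanh_sub_log_cosh ht ht') h.le

lemma cosh_rpow_div_cos_rpow_le {p t : ℝ} (hp : 9 ≤ p) (ht : 0 ≤ t) :
    cosh t ^ p / cos (π / (2 * p)) ^ p
      ≤ cosh (p / (p - 1) * t) ^ (p - 1) + tan (π / (2 * p)) := by
  have hp1 : 0 < p - 1 := by linarith
  have hcos : 0 < cos (π / (2 * p)) := cos_pi_div_pos (by linarith)
  have hcore := exp_neg_mul_log_cos_pi_div_le hp ht
  have hlhs : cosh t ^ p / cos (π / (2 * p)) ^ p
      = exp (p * log (cosh t)) * exp (-(p * log (cos (π / (2 * p))))) := by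
    rw [rpow_def_of_pos (cosh_pos t), rpow_def_of_pos hcos, div_eq_mul_inv, ← exp_neg]
    ring_nf
  have htangent : exp (p * log (cosh t)) * exp (t * tanh t - log (cosh t))
      ≤ cosh (p / (p - 1) * t) ^ (p - 1) := by
    calc exp (p * log (cosh t)) * exp (t * tanh t - log (cosh t))
        = (cosh t * exp ((p / (p - 1) * t - t) * tanh t)) ^ (p - 1) := by
          rw [mul_rpow (cosh_pos t).le (exp_pos _).le, rpow_def_of_pos (cosh_pos t), ← exp_mul,
            ← exp_add, ← exp_add]
          congr 1
          field_simp
          ring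
      _ ≤ cosh (p / (p - 1) * t) ^ (p - 1) :=
          rpow_le_rpow (by positivity) (cosh_mul_exp_le_cosh _ _) hp1.le
  have htan : exp (p * log (cosh t)) * (tan (π / (2 * p)) * exp (-(p * log (cosh t))))
      = tan (π / (2 * p)) := by
    rw [mul_left_comm, ← exp_add, add_neg_cancel, exp_zero, mul_one]
  rw [hlhs, ← htan]
  nlinarith [mul_le_mul_of_nonneg_left hcore (exp_pos (p * log (cosh t))).le]

lemma one_add_exp_neg_two_mul_div_two_rpow (t q : ℝ) :
    ((1 + exp (-(2 * t))) / 2) ^ q = exp (-(q * t)) * cosh t ^ q := by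
  rw [one_add_exp_neg_two_mul, mul_assoc, mul_div_cancel_left₀ _ two_ne_zero,
    mul_rpow (exp_pos _).le (cosh_pos t).le, ← exp_mul]
  ring_nf

theorem key_t_zero_large_p (p : ℝ) (hp : 9 ≤ p)
    (r : ℝ) (hr : r ∈ Set.Icc (0 : ℝ) 1) :
    (1 + r) ^ p / ((2 : ℝ) ^ p * Real.cos (π / (2 * p)) ^ p)
      - ((1 + r ^ (p / (p - 1))) / 2) ^ (p - 1)
      - r ^ (p / 2) * Real.tan (π / (2 * p)) ≤ 0 := by
  obtain ⟨hr0, hr1⟩ := hr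
  have hp1 : p - 1 ≠ 0 := by linarith
  rcases hr0.eq_or_lt with rfl | hr
  · rw [zero_rpow (div_ne_zero (by linarith) hp1), zero_rpow (by linarith), add_zero,
      one_rpow, zero_mul, sub_zero, sub_nonpos]
    exact one_div_two_rpow_mul_cos_rpow_le hp
  obtain ⟨t, ht, rfl⟩ : ∃ t, 0 ≤ t ∧ exp (-(2 * t)) = r :=
    ⟨-log r / 2, by linarith [log_nonpos hr0 hr1],
      by rw [show -(2 * (-log r / 2)) = log r by ring, exp_log hr]⟩
  have h1 : (1 + exp (-(2 * t))) ^ p / (2 ^ p * cos (π / (2 * p)) ^ p)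
      = exp (-(p * t)) * (cosh t ^ p / cos (π / (2 * p)) ^ p) := by
    rw [← div_div, ← div_rpow (by positivity) zero_le_two, one_add_exp_neg_two_mul_div_two_rpow,
      mul_div_assoc]
  have h2 : ((1 + exp (-(2 * t)) ^ (p / (p - 1))) / 2) ^ (p - 1)
      = exp (-(p * t)) * cosh (p / (p - 1) * t) ^ (p - 1) := by
    rw [← exp_mul, show -(2 * t) * (p / (p - 1)) = -(2 * (p / (p - 1) * t)) by ring,
      one_add_exp_neg_two_mul_div_two_rpow]
    congr 3
    field_simp
  have h3 : exp (-(2 * t)) ^ (p / 2) = exp (-(p * t)) := by rw [← exp_mul]; ring_nf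
  rw [h1, h2, h3]
  nlinarith [mul_le_mul_of_nonneg_left (cosh_rpow_div_cos_rpow_le hp ht) (exp_pos (-(p * t))).le]
end

section
/- For p ≥ 9 and all r with 0 ≤ r ≤ 2^(1/p)·cos(π/(2p)) − 1, one has ((1 + r^(p/(p−1)))/2)^(p−1) + r^(p/2)·tan(π/(2p)) ≥ (1+r)^p / (2^p · cos^p(π/(2p))). -/
/-!
Both sides are compared with `2 ^ (1 - p)`. The first term on the left is at least `2 ^ (1 - p)`
because `r ^ (p / (p - 1)) ≥ 0`, and the bound on `r` says exactly `(1 + r) ^ p ≤ 2 cos ^ p (π / (2p))`,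
which puts the right-hand side below `2 ^ (1 - p)`.
-/

open Real

lemma rpow_le_mul_rpow_of_le_rpow_one_div_mul {x a c p : ℝ} (hx : 0 ≤ x) (ha : 0 ≤ a)
    (hc : 0 ≤ c) (hp : 0 < p) (h : x ≤ a ^ (1 / p) * c) : x ^ p ≤ a * c ^ p := by
  calc x ^ p ≤ (a ^ (1 / p) * c) ^ p := rpow_le_rpow hx h hp.le
    _ = a * c ^ p := by
      rw [mul_rpow (rpow_nonneg ha _) hc, one_div, rpow_inv_rpow ha hp.ne']

lemma div_two_rpow_mul_rpow_le_two_rpow_one_sub {y c p : ℝ} (hc : 0 < c)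
    (h : y ≤ 2 * c ^ p) : y / (2 ^ p * c ^ p) ≤ 2 ^ (1 - p) := by
  have hcp : 0 < c ^ p := rpow_pos_of_pos hc p
  have h2p : (0 : ℝ) < 2 ^ p := by positivity
  rw [rpow_sub two_pos, rpow_one, div_le_div_iff₀ (by positivity) h2p]
  nlinarith

lemma two_rpow_one_sub_le_half_one_add_rpow {s p : ℝ} (hs : 0 ≤ s) (hp : 1 ≤ p) :
    (2 : ℝ) ^ (1 - p) ≤ ((1 + s) / 2) ^ (p - 1) := by
  rw [show 1 - p = -(p - 1) by ring, rpow_neg zero_le_two, ← inv_rpow zero_le_two]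
  exact rpow_le_rpow (by norm_num) (by linarith) (by linarith)

lemma pi_div_two_mul_mem_Ioo {p : ℝ} (hp : 1 < p) : π / (2 * p) ∈ Set.Ioo 0 (π / 2) :=
  ⟨by positivity, div_lt_div_of_pos_left pi_pos two_pos (by linarith)⟩

theorem first_step_large_p (p : ℝ) (hp : 9 ≤ p)
    (r : ℝ) (hr0 : 0 ≤ r) (hr1 : r ≤ (2 : ℝ) ^ (1 / p) * Real.cos (π / (2 * p)) - 1) :
    ((1 + r ^ (p / (p - 1))) / 2) ^ (p - 1) + r ^ (p / 2) * Real.tan (π / (2 * p)) ≥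
      (1 + r) ^ p / ((2 : ℝ) ^ p * Real.cos (π / (2 * p)) ^ p) := by
  obtain ⟨hθ0, hθ1⟩ := pi_div_two_mul_mem_Ioo (by linarith : 1 < p)
  have hcos : 0 < cos (π / (2 * p)) := cos_pos_of_mem_Ioo ⟨by linarith, hθ1⟩
  have htan : 0 ≤ tan (π / (2 * p)) := tan_nonneg_of_nonneg_of_le_pi_div_two hθ0.le hθ1.le
  have hpow : (1 + r) ^ p ≤ 2 * cos (π / (2 * p)) ^ p :=
    rpow_le_mul_rpow_of_le_rpow_one_div_mul (by linarith) zero_le_two hcos.le (by linarith)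
      (by linarith)
  calc (1 + r) ^ p / ((2 : ℝ) ^ p * cos (π / (2 * p)) ^ p)
      ≤ 2 ^ (1 - p) := div_two_rpow_mul_rpow_le_two_rpow_one_sub hcos hpow
    _ ≤ ((1 + r ^ (p / (p - 1))) / 2) ^ (p - 1) :=
      two_rpow_one_sub_le_half_one_add_rpow (rpow_nonneg hr0 _) (by linarith)
    _ ≤ _ := le_add_of_nonneg_right (mul_nonneg (rpow_nonneg hr0 _) htan)
end

section
/- For all real p > 3, (p−1)·log(1 − 2/((p−1)(p−2))) − log(1 − 2/p) < 0. -/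
/-! Both terms are controlled by `log x < x - 1`: the first is below `-(p - 1) · 2/((p - 1)(p - 2))
= -2/(p - 2)`, while `-log (1 - 2/p) = log (p/(p - 2))` is below `p/(p - 2) - 1 = 2/(p - 2)`. -/

namespace Real

theorem log_one_sub_lt_neg {t : ℝ} (ht0 : t ≠ 0) (ht1 : t < 1) : log (1 - t) < -t := by
  have := log_lt_sub_one_of_pos (sub_pos.2 ht1) (by simpa using ht0)
  linarith

theorem neg_log_one_sub_lt {t : ℝ} (ht0 : t ≠ 0) (ht1 : t < 1) :
    -log (1 - t) < t / (1 - t) := by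
  have hpos : 0 < 1 - t := sub_pos.2 ht1
  calc -log (1 - t) = log (1 - t)⁻¹ := (log_inv _).symm
    _ < (1 - t)⁻¹ - 1 := log_lt_sub_one_of_pos (inv_pos.2 hpos) (by simpa using ht0)
    _ = t / (1 - t) := by field_simp; ring

end Real

theorem G_neg (p : ℝ) (hp : 3 < p) :
    (p - 1) * Real.log (1 - 2 / ((p - 1) * (p - 2))) - Real.log (1 - 2 / p) < 0 := by
  have hp1 : 0 < p - 1 := by linarith
  have hp2 : 0 < p - 2 := by linarith
  have hfirst : (p - 1) * Real.log (1 - 2 / ((p - 1) * (p - 2))) < -(2 / (p - 2)) := by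
    have hlt : 2 / ((p - 1) * (p - 2)) < 1 := by
      rw [div_lt_one (by positivity)]; nlinarith
    calc (p - 1) * Real.log (1 - 2 / ((p - 1) * (p - 2)))
        < (p - 1) * -(2 / ((p - 1) * (p - 2))) :=
          mul_lt_mul_of_pos_left (Real.log_one_sub_lt_neg (by positivity) hlt) hp1
      _ = -(2 / (p - 2)) := by field_simp
  have hsecond : -Real.log (1 - 2 / p) < 2 / (p - 2) := by
    have hlt : 2 / p < 1 := by rw [div_lt_one (by positivity)]; linarith
    calc -Real.log (1 - 2 / p) < 2 / p / (1 - 2 / p) := Real.neg_log_one_sub_lt (by positivity) hlt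
      _ = 2 / (p - 2) := by field_simp
  linarith
end
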